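/- Completeness of LCR: for every set Γ of L≻-formulas and every L≻-formula φ, if Γ ⊨ φ then Γ ⊢_LCR φ. -/

import Mathlib

namespace LCR

/-- Łukasiewicz negation on ℝ. -/
noncomputable def lneg (a : ℝ) : ℝ := 1 - a

/-- Łukasiewicz implication on ℝ. -/
noncomputable def limp (a b : ℝ) : ℝ := min 1 (1 - a + b)

/-- Łukasiewicz strong conjunction ⊙ on ℝ. -/
noncomputable def lodot (a b : ℝ) : ℝ := max 0 (a + b - 1)

/-- The truth-value set T = {0, 1/(m−1), …, 1}. -/
def Tset (m : ℕ) : Set ℝ := {a | ∃ i : Fin m, a = (i : ℝ) / ((m : ℝ) - 1)}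

/-- The k-th truth value k/(m−1). -/
noncomputable def tv (m : ℕ) (k : Fin m) : ℝ := (k : ℝ) / ((m : ℝ) - 1)

/-- Formulas of the language L≻. -/
inductive Formula : Type where
  | var  : ℕ → Formula
  | neg  : Formula → Formula
  | imp  : Formula → Formula → Formula
  | cond : Formula → Formula → Formula
deriving DecidableEq

namespace Formula
/-- φ ∨ ψ := (φ → ψ) → ψ. -/
def or (φ ψ : Formula) : Formula := .imp (.imp φ ψ) ψ
/-- φ ∧ ψ := ¬(¬φ ∨ ¬ψ). -/
def and (φ ψ : Formula) : Formula := .neg (Formula.or (.neg φ) (.neg ψ))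
/-- φ ↔ ψ := (φ → ψ) ∧ (ψ → φ). -/
def iff (φ ψ : Formula) : Formula := Formula.and (.imp φ ψ) (.imp ψ φ)
end Formula

/-- Purely propositional (¬,→)-formulas. -/
inductive PForm : Type where
  | var : ℕ → PForm
  | neg : PForm → PForm
  | imp : PForm → PForm → PForm

/-- Evaluation of a propositional formula under an assignment. -/
noncomputable def PForm.eval (σ : ℕ → ℝ) : PForm → ℝ
  | .var n => σ n
  | .neg φ => lneg (PForm.eval σ φ)
  | .imp φ ψ => limp (PForm.eval σ φ) (PForm.eval σ ψ)

/-- Tautology of Łukasiewicz m-valued propositional logic. -/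
def PForm.Taut (m : ℕ) (φ : PForm) : Prop :=
  ∀ σ : ℕ → ℝ, (∀ n, σ n ∈ Tset m) → PForm.eval σ φ = 1

/-- Substitution of L≻-formulas for the variables of a propositional formula. -/
def PForm.subst (σ : ℕ → Formula) : PForm → Formula
  | .var n => σ n
  | .neg φ => .neg (PForm.subst σ φ)
  | .imp φ ψ => .imp (PForm.subst σ φ) (PForm.subst σ ψ)

/-- `J` is a family of Rosser–Turquette J-operators: each `J a` is obtained by substitution
into a (¬,→)-definable one-place connective whose value is 1 at inputs equal to `tv m a`
and 0 at all other truth values. -/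
def IsJFamily (m : ℕ) (J : Fin m → Formula → Formula) : Prop :=
  ∃ P : Fin m → PForm,
    (∀ a φ, J a φ = PForm.subst (fun _ => φ) (P a)) ∧
    (∀ (a : Fin m) (σ : ℕ → ℝ), (∀ n, σ n ∈ Tset m) →
      PForm.eval σ (P a) = if σ 0 = tv m a then 1 else 0)

/-- `I` is a family of threshold operators: each `I a` is obtained by substitution into a
(¬,→)-definable one-place connective whose value is 1 at inputs ≥ `tv m a` and 0 otherwise. -/
def IsIFamily (m : ℕ) (I : Fin m → Formula → Formula) : Prop :=
  ∃ P : Fin m → PForm,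
    (∀ a φ, I a φ = PForm.subst (fun _ => φ) (P a)) ∧
    (∀ (a : Fin m) (σ : ℕ → ℝ), (∀ n, σ n ∈ Tset m) →
      PForm.eval σ (P a) = if tv m a ≤ σ 0 then 1 else 0)

/-- The index of aᵢ = (m−i)/(m−1) for i = j+1, i.e. m−1−j. -/
def revIdx {m : ℕ} (j : Fin m) : Fin m := ⟨m - 1 - j.1, by have := j.isLt; omega⟩

/-- Index-level strong conjunction: tv (odotIdx a b) = tv a ⊙ tv b. -/
def odotIdx {m : ℕ} (a b : Fin m) : Fin m :=
  ⟨a.1 + b.1 - (m - 1), by have := a.isLt; have := b.isLt; omega⟩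

/-- Nested implication →ⁿᵢ₌₁(φᵢ, ψ) = φₙ → (φₙ₋₁ → (⋯ → (φ₁ → ψ))), with φᵢ = f (i−1). -/
def nestImp : (n : ℕ) → (Fin n → Formula) → Formula → Formula
  | 0, _, ψ => ψ
  | n+1, f, ψ => .imp (f (Fin.last n)) (nestImp n (fun i => f i.castSucc) ψ)

/-- Theorems of the system LCR (relative to the I-operators used in the rules R_a). -/
inductive Thm (m : ℕ) (I : Fin m → Formula → Formula) : Formula → Prop where
  | taut : ∀ (ψ : PForm) (σ : ℕ → Formula), PForm.Taut m ψ → Thm m I (PForm.subst σ ψ)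
  | a1 : ∀ φ ψ θ : Formula,
      Thm m I (.imp (.cond φ (ψ.and θ)) ((Formula.cond φ ψ).and (.cond φ θ)))
  | a2 : ∀ φ ψ θ : Formula,
      Thm m I (.imp ((Formula.cond φ ψ).and (.cond φ θ)) (.cond φ (ψ.and θ)))
  | a3 : ∀ (φ : Formula) (p : ℕ), Thm m I (.cond φ (.imp (.var p) (.var p)))
  | mp : ∀ φ ψ : Formula, Thm m I (.imp φ ψ) → Thm m I φ → Thm m I ψ
  | rcea : ∀ φ ψ θ : Formula,
      Thm m I (φ.iff ψ) → Thm m I ((Formula.cond φ θ).iff (.cond ψ θ))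
  | rcec : ∀ φ ψ θ : Formula,
      Thm m I (φ.iff ψ) → Thm m I ((Formula.cond θ φ).iff (.cond θ ψ))
  | ra : ∀ (a : Fin m) (φ : Formula) (γ : Fin m → Formula) (δ : Formula),
      (∀ b : Fin m,
        Thm m I (nestImp m (fun j => I (odotIdx (revIdx j) b) (γ j)) (I (odotIdx a b) δ))) →
      Thm m I (nestImp m (fun j => I (revIdx j) (.cond φ (γ j))) (I a (.cond φ δ)))

/-- Γ ⊢_LCR φ : derivability from Γ by theorems of LCR and modus ponens. -/
inductive Deriv (m : ℕ) (I : Fin m → Formula → Formula) (Γ : Set Formula) : Formula → Prop where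
  | thm : ∀ φ, Thm m I φ → Deriv m I Γ φ
  | mem : ∀ φ, φ ∈ Γ → Deriv m I Γ φ
  | mp : ∀ φ ψ, Deriv m I Γ (.imp φ ψ) → Deriv m I Γ φ → Deriv m I Γ ψ

/-- A Kripke LCR model over a set of worlds W. -/
structure Model (m : ℕ) (W : Type) : Type where
  ne : Nonempty W
  R : (Fin m → Set W) → W → W → ℝ
  R_mem : ∀ X x y, R X x y ∈ Tset m
  v : ℕ → W → ℝ
  v_mem : ∀ p x, v p x ∈ Tset m

/-- Valuation of formulas in a Kripke LCR model. -/
noncomputable def Model.val {m : ℕ} {W : Type} (M : Model m W) : Formula → W → ℝ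
  | .var p, x => M.v p x
  | .neg φ, x => lneg (M.val φ x)
  | .imp φ ψ, x => limp (M.val φ x) (M.val ψ x)
  | .cond φ ψ, x =>
      sInf (Set.range fun y : W =>
        limp (M.R (fun i => {z : W | M.val φ z = tv m i}) x y) (M.val ψ y))

/-- Semantic consequence Γ ⊨ φ over all Kripke LCR models. -/
def Entails (m : ℕ) (Γ : Set Formula) (φ : Formula) : Prop :=
  ∀ (W : Type) (M : Model m W) (x : W), (∀ ψ ∈ Γ, M.val ψ x = 1) → M.val φ x = 1

/-- Syntactic consistency. -/
def Consistent (m : ℕ) (I : Fin m → Formula → Formula) (Γ : Set Formula) : Prop :=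
  ¬ ∃ φ : Formula, Deriv m I Γ φ ∧ Deriv m I Γ (.neg φ)

/-- Maximal consistency. -/
def MaxConsistent (m : ℕ) (I : Fin m → Formula → Formula) (Γ : Set Formula) : Prop :=
  Consistent m I Γ ∧ ∀ φ : Formula, Deriv m I Γ φ → φ ∈ Γ


section Basics
variable {n : ℕ}

def ftop (n : ℕ) : Fin (n+2) := ⟨n+1, by omega⟩
def fneg {n : ℕ} (a : Fin (n+2)) : Fin (n+2) := ⟨n+1 - a.1, by omega⟩
def fimp {n : ℕ} (a b : Fin (n+2)) : Fin (n+2) := ⟨min (n+1) (n+1 - a.1 + b.1), by omega⟩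

lemma tv_def (k : Fin (n+2)) : tv (n+2) k = (k.1 : ℝ)/((n:ℝ)+1) := by
  unfold tv; push_cast; ring_nf

lemma np1_pos : (0:ℝ) < (n:ℝ)+1 := by positivity

lemma tv_le_tv {a b : Fin (n+2)} : tv (n+2) a ≤ tv (n+2) b ↔ a.1 ≤ b.1 := by
  rw [tv_def, tv_def, div_le_div_iff_of_pos_right np1_pos, Nat.cast_le]

lemma tv_inj {a b : Fin (n+2)} (h : tv (n+2) a = tv (n+2) b) : a = b :=
  Fin.ext (le_antisymm (tv_le_tv.1 h.le) (tv_le_tv.1 h.ge))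

lemma tv_nonneg (a : Fin (n+2)) : 0 ≤ tv (n+2) a := by
  rw [tv_def]; positivity

lemma tv_le_one (a : Fin (n+2)) : tv (n+2) a ≤ 1 := by
  rw [tv_def, div_le_one np1_pos]
  have h : a.1 ≤ n+1 := by have := a.isLt; omega
  exact_mod_cast Nat.cast_le.2 h

lemma tv_ftop : tv (n+2) (ftop n) = 1 := by
  rw [tv_def]; field_simp [ftop]
  simp [ftop]

lemma tv_zero : tv (n+2) (0 : Fin (n+2)) = 0 := by
  rw [tv_def]; simp

lemma tv_mem_Tset (k : Fin (n+2)) : tv (n+2) k ∈ Tset (n+2) := ⟨k, by rw [tv_def]; push_cast; ring_nf⟩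

lemma mem_Tset_iff {a : ℝ} : a ∈ Tset (n+2) ↔ ∃ k : Fin (n+2), a = tv (n+2) k := by
  constructor
  · rintro ⟨k, rfl⟩
    exact ⟨k, by rw [tv_def]; push_cast; ring_nf⟩
  · rintro ⟨k, rfl⟩
    exact tv_mem_Tset k

lemma Tset_sub_Icc : Tset (n+2) ⊆ Set.Icc (0:ℝ) 1 := by
  intro a ha
  obtain ⟨k, rfl⟩ := mem_Tset_iff.1 ha
  exact ⟨tv_nonneg k, tv_le_one k⟩

lemma lneg_tv (a : Fin (n+2)) : lneg (tv (n+2) a) = tv (n+2) (fneg a) := by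
  have ha : a.1 ≤ n+1 := by have := a.isLt; omega
  rw [lneg, tv_def, tv_def, fneg]
  rw [eq_div_iff (ne_of_gt np1_pos)]
  push_cast [Nat.cast_sub ha]
  field_simp

lemma limp_tv (a b : Fin (n+2)) : limp (tv (n+2) a) (tv (n+2) b) = tv (n+2) (fimp a b) := by
  have ha : a.1 ≤ n+1 := by have := a.isLt; omega
  rw [limp, tv_def, tv_def, tv_def, fimp]
  show min 1 (1 - (a.1:ℝ)/((n:ℝ)+1) + (b.1:ℝ)/((n:ℝ)+1)) = ((min (n+1) (n+1 - a.1 + b.1) : ℕ) : ℝ)/((n:ℝ)+1)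
  rw [Nat.cast_min, ← min_div_div_right np1_pos.le]
  have h1 : ((n+1 : ℕ):ℝ)/((n:ℝ)+1) = 1 := by push_cast; field_simp
  have h2 : ((n + 1 - a.1 + b.1 : ℕ):ℝ) = (n:ℝ)+1-(a.1:ℝ)+(b.1:ℝ) := by
    push_cast [Nat.cast_sub ha]; ring
  rw [h1, h2]
  congr 1
  field_simp

lemma fimp_eq_ftop {a b : Fin (n+2)} : fimp a b = ftop n ↔ a.1 ≤ b.1 := by
  constructor
  · intro h
    have := congrArg Fin.val h
    simp only [fimp, ftop] at this
    omega
  · intro h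
    have := a.isLt
    apply Fin.ext
    simp only [fimp, ftop]
    omega

lemma fimp_ftop_left {t : Fin (n+2)} : fimp (ftop n) t = t := by
  apply Fin.ext; simp only [fimp, ftop]
  have := t.isLt; omega

lemma fimp_zero_left {t : Fin (n+2)} : fimp (0 : Fin (n+2)) t = ftop n := by
  apply Fin.ext; simp only [fimp, ftop, Fin.val_zero]; omega
end Basics
section Hom
variable {n : ℕ}

def IsHom (n : ℕ) (e : Formula → Fin (n+2)) : Prop :=
  (∀ φ, e (.neg φ) = fneg (e φ)) ∧ (∀ φ ψ, e (.imp φ ψ) = fimp (e φ) (e ψ))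

variable {e : Formula → Fin (n+2)}

lemma IsHom.neg (he : IsHom n e) (φ : Formula) : e (.neg φ) = fneg (e φ) := he.1 φ
lemma IsHom.imp (he : IsHom n e) (φ ψ : Formula) : e (.imp φ ψ) = fimp (e φ) (e ψ) := he.2 φ ψ

lemma IsHom.imp_eq_ftop (he : IsHom n e) {φ ψ : Formula} :
    e (.imp φ ψ) = ftop n ↔ (e φ).1 ≤ (e ψ).1 := by
  rw [he.imp]; exact fimp_eq_ftop

lemma IsHom.or_val (he : IsHom n e) (φ ψ : Formula) :
    (e (Formula.or φ ψ)).1 = max (e φ).1 (e ψ).1 := by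
  show (e (.imp (.imp φ ψ) ψ)).1 = _
  rw [he.imp, he.imp]
  have h1 := (e φ).isLt
  have h2 := (e ψ).isLt
  simp only [fimp]
  omega

lemma IsHom.and_val (he : IsHom n e) (φ ψ : Formula) :
    (e (Formula.and φ ψ)).1 = min (e φ).1 (e ψ).1 := by
  show (e (.neg (Formula.or (.neg φ) (.neg ψ)))).1 = _
  rw [he.neg]
  simp only [fneg]
  rw [he.or_val, he.neg, he.neg]
  simp only [fneg]
  have h1 := (e φ).isLt
  have h2 := (e ψ).isLt
  omega

lemma IsHom.iff_eq_ftop (he : IsHom n e) {φ ψ : Formula} :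
    e (Formula.iff φ ψ) = ftop n ↔ e φ = e ψ := by
  show e (Formula.and (.imp φ ψ) (.imp ψ φ)) = ftop n ↔ _
  constructor
  · intro h
    have hv := congrArg Fin.val h
    rw [he.and_val, he.imp, he.imp] at hv
    simp only [fimp, ftop] at hv
    have h1 := (e φ).isLt
    have h2 := (e ψ).isLt
    exact Fin.ext (by omega)
  · intro h
    apply Fin.ext
    rw [he.and_val, he.imp, he.imp, h]
    simp only [fimp, ftop]
    have h2 := (e ψ).isLt
    omega

lemma IsHom.imp_le (he : IsHom n e) {φ ψ : Formula} (h : e (.imp φ ψ) = ftop n) :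
    (e φ).1 ≤ (e ψ).1 := he.imp_eq_ftop.1 h

end Hom

section Encode

def toNat : Formula → ℕ
  | .var p => 4 * p
  | .neg φ => 4 * toNat φ + 1
  | .imp φ ψ => 4 * Nat.pair (toNat φ) (toNat ψ) + 2
  | .cond φ ψ => 4 * Nat.pair (toNat φ) (toNat ψ) + 3

theorem toNat_inj : ∀ φ ψ : Formula, toNat φ = toNat ψ → φ = ψ := by
  intro φ
  induction φ with
  | var p => intro ψ h; cases ψ <;> simp only [toNat] at h <;> first | omega | (simp; omega)
  | neg φ ih =>
    intro ψ h; cases ψ <;> simp only [toNat] at h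
    · omega
    · rename_i χ; have : toNat φ = toNat χ := by omega
      rw [ih _ this]
    · omega
    · omega
  | imp φ ψ ihφ ihψ =>
    intro χ h; cases χ <;> simp only [toNat] at h
    · omega
    · omega
    · rename_i α β
      have : Nat.pair (toNat φ) (toNat ψ) = Nat.pair (toNat α) (toNat β) := by omega
      obtain ⟨h1, h2⟩ := Nat.pair_eq_pair.1 this
      rw [ihφ _ h1, ihψ _ h2]
    · omega
  | cond φ ψ ihφ ihψ =>
    intro χ h; cases χ <;> simp only [toNat] at h
    · omega
    · omega
    · omega
    · rename_i α β
      have : Nat.pair (toNat φ) (toNat ψ) = Nat.pair (toNat α) (toNat β) := by omega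
      obtain ⟨h1, h2⟩ := Nat.pair_eq_pair.1 this
      rw [ihφ _ h1, ihψ _ h2]

instance : Inhabited Formula := ⟨.var 0⟩

open Classical in
noncomputable def invFormula (k : ℕ) : Formula :=
  if h : ∃ φ : Formula, toNat φ = k then h.choose else default

lemma invFormula_toNat (φ : Formula) : invFormula (toNat φ) = φ := by
  have h : ∃ ψ : Formula, toNat ψ = toNat φ := ⟨φ, rfl⟩
  rw [invFormula]
  rw [dif_pos h]
  exact toNat_inj _ _ h.choose_spec

/-- Propositional skeleton: atoms (vars and conditionals) become propositional variables. -/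
def skel : Formula → PForm
  | .var p => .var (toNat (.var p))
  | .cond φ ψ => .var (toNat (.cond φ ψ))
  | .neg φ => .neg (skel φ)
  | .imp φ ψ => .imp (skel φ) (skel ψ)

lemma subst_skel (χ : Formula) : PForm.subst invFormula (skel χ) = χ := by
  induction χ with
  | var p => exact invFormula_toNat _
  | neg φ ih => simp [skel, PForm.subst, ih]
  | imp φ ψ ihφ ihψ => simp [skel, PForm.subst, ihφ, ihψ]
  | cond φ ψ _ _ => exact invFormula_toNat _

variable {n : ℕ}

noncomputable def idxOf (n : ℕ) (a : ℝ) : Fin (n+2) :=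
  if h : ∃ k : Fin (n+2), a = tv (n+2) k then h.choose else 0

lemma tv_idxOf {a : ℝ} (h : a ∈ Tset (n+2)) : tv (n+2) (idxOf n a) = a := by
  obtain ⟨k, hk⟩ := mem_Tset_iff.1 h
  have h' : ∃ k : Fin (n+2), a = tv (n+2) k := ⟨k, hk⟩
  rw [idxOf, dif_pos h']
  exact h'.choose_spec.symm

noncomputable def homOf (n : ℕ) (σ : ℕ → ℝ) : Formula → Fin (n+2)
  | .var p => idxOf n (σ (toNat (.var p)))
  | .neg φ => fneg (homOf n σ φ)
  | .imp φ ψ => fimp (homOf n σ φ) (homOf n σ ψ)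
  | .cond φ ψ => idxOf n (σ (toNat (.cond φ ψ)))

lemma isHom_homOf (σ : ℕ → ℝ) : IsHom n (homOf n σ) :=
  ⟨fun _ => rfl, fun _ _ => rfl⟩

lemma eval_skel {σ : ℕ → ℝ} (hσ : ∀ k, σ k ∈ Tset (n+2)) (χ : Formula) :
    PForm.eval σ (skel χ) = tv (n+2) (homOf n σ χ) := by
  induction χ with
  | var p => exact (tv_idxOf (hσ _)).symm
  | neg φ ih => show lneg _ = _; rw [ih, lneg_tv]; rfl
  | imp φ ψ ihφ ihψ => show limp _ _ = _; rw [ihφ, ihψ, limp_tv]; rfl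
  | cond φ ψ _ _ => exact (tv_idxOf (hσ _)).symm

lemma tv_subst {e : Formula → Fin (n+2)} (he : IsHom n e) (τ : ℕ → Formula) (ψ0 : PForm) :
    tv (n+2) (e (PForm.subst τ ψ0)) = PForm.eval (fun k => tv (n+2) (e (τ k))) ψ0 := by
  induction ψ0 with
  | var k => rfl
  | neg φ ih =>
    show tv (n+2) (e (.neg (PForm.subst τ φ))) = lneg _
    rw [he.neg, ← lneg_tv, ih]
  | imp φ ψ ihφ ihψ =>
    show tv (n+2) (e (.imp (PForm.subst τ φ) (PForm.subst τ ψ))) = limp _ _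
    rw [he.imp, ← limp_tv, ihφ, ihψ]

end Encode
section Pow

def podot (p q : PForm) : PForm := .neg (.imp p (.neg q))
def powP : ℕ → PForm → PForm
  | 0, q => q
  | k+1, q => podot (powP k q) q

def fodot (A B : Formula) : Formula := .neg (.imp A (.neg B))
def fpow : ℕ → Formula → Formula
  | 0, A => A
  | k+1, A => fodot (fpow k A) A

lemma subst_powP (τ : ℕ → Formula) (q : PForm) : ∀ k, PForm.subst τ (powP k q) = fpow k (PForm.subst τ q)
  | 0 => rfl
  | (k+1) => by
    show PForm.subst τ (podot (powP k q) q) = fodot (fpow k (PForm.subst τ q)) (PForm.subst τ q)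
    simp only [podot, fodot, PForm.subst, subst_powP τ q k]

lemma eval_mem_Icc {σ : ℕ → ℝ} (hσ : ∀ k, σ k ∈ Set.Icc (0:ℝ) 1) :
    ∀ ψ : PForm, PForm.eval σ ψ ∈ Set.Icc (0:ℝ) 1 := by
  intro ψ
  induction ψ with
  | var k => exact hσ k
  | neg φ ih =>
    show lneg _ ∈ _
    rw [lneg]
    constructor <;> [linarith [ih.2]; linarith [ih.1]]
  | imp φ ψ ihφ ihψ =>
    show limp _ _ ∈ _
    rw [limp]
    constructor
    · apply le_min (by norm_num)
      linarith [ihφ.2, ihψ.1]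
    · exact min_le_left _ _

lemma eval_podot (σ : ℕ → ℝ) (p q : PForm) :
    PForm.eval σ (podot p q) = max 0 (PForm.eval σ p + PForm.eval σ q - 1) := by
  show lneg (limp (PForm.eval σ p) (lneg (PForm.eval σ q))) = _
  rw [lneg, limp, lneg]
  rcases le_total 1 (1 - PForm.eval σ p + (1 - PForm.eval σ q)) with h | h
  · rw [min_eq_left h, max_eq_left (by linarith)]
    norm_num
  · rw [min_eq_right h, max_eq_right (by linarith)]
    ring

lemma eval_powP {σ : ℕ → ℝ} {q : PForm} (hq : PForm.eval σ q ∈ Set.Icc (0:ℝ) 1) :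
    ∀ k, PForm.eval σ (powP k q) = max 0 ((k+1) * PForm.eval σ q - k) := by
  intro k
  induction k with
  | zero => simp [powP, max_eq_right hq.1]
  | succ k ih =>
    show PForm.eval σ (podot (powP k q) q) = _
    rw [eval_podot, ih]
    rcases le_total ((k+1) * PForm.eval σ q - k) 0 with h | h
    · rw [max_eq_left h, max_eq_left (by linarith [hq.2]), max_eq_left (by push_cast; nlinarith [hq.2])]
    · rw [max_eq_right h]
      congr 1
      push_cast
      ring

/-- Value of the (n+1)-fold strong self-conjunction at a truth value: crisp J₁. -/
lemma eval_powP_tv {n : ℕ} {σ : ℕ → ℝ} {q : PForm} {k : Fin (n+2)}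
    (hq : PForm.eval σ q = tv (n+2) k) :
    PForm.eval σ (powP n q) = if k = ftop n then 1 else 0 := by
  have hmem : PForm.eval σ q ∈ Set.Icc (0:ℝ) 1 := by
    rw [hq]; exact ⟨tv_nonneg k, tv_le_one k⟩
  rw [eval_powP hmem n, hq, tv_def]
  have h1 : ((n:ℝ)+1) * ((k.1:ℕ):ℝ)/((n:ℝ)+1) = (k.1:ℝ) := by field_simp
  have h1' : ((n:ℝ)+1) * (((k.1:ℕ):ℝ)/((n:ℝ)+1)) = (k.1:ℝ) := by field_simp
  by_cases h : k = ftop n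
  · rw [if_pos h]
    have hk : (k.1:ℝ) = (n:ℝ)+1 := by
      rw [h]; show (((n+1:ℕ)):ℝ) = _; push_cast; ring
    rw [h1', hk, max_eq_right] <;> linarith
  · rw [if_neg h]
    have hk : k.1 ≤ n := by
      have := k.isLt
      have hne : k.1 ≠ n+1 := fun hc => h (Fin.ext (by simp [ftop, hc]))
      omega
    have h2 : (k.1:ℝ) ≤ (n:ℝ) := by exact_mod_cast hk
    rw [h1', max_eq_left] ; linarith

end Pow
section Compact
variable {n : ℕ}

open Classical in
lemma cpt (S : Set Formula) (con : Formula)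
    (h : ∀ e : Formula → Fin (n+2), IsHom n e → (∀ θ ∈ S, e θ = ftop n) → e con = ftop n) :
    ∃ l : List Formula, (∀ θ ∈ l, θ ∈ S) ∧
      ∀ e : Formula → Fin (n+2), IsHom n e → (∀ θ ∈ l, e θ = ftop n) → e con = ftop n := by
  classical
  set E := Formula → Fin (n+2)
  have hcl1 : IsClosed {e : E | IsHom n e} := by
    have : {e : E | IsHom n e} =
        (⋂ φ : Formula, {e : E | e (.neg φ) = fneg (e φ)}) ∩
        (⋂ p : Formula × Formula, {e : E | e (.imp p.1 p.2) = fimp (e p.1) (e p.2)}) := by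
      ext e
      simp only [Set.mem_inter_iff, Set.mem_iInter, Set.mem_setOf_eq, IsHom]
      exact ⟨fun ⟨h1, h2⟩ => ⟨h1, fun p => h2 p.1 p.2⟩, fun ⟨h1, h2⟩ => ⟨h1, fun a b => h2 (a, b)⟩⟩
    rw [this]
    apply IsClosed.inter
    · apply isClosed_iInter
      intro φ
      have : {e : E | e (.neg φ) = fneg (e φ)} =
          (fun e : E => (e (.neg φ), e φ)) ⁻¹' {p | p.1 = fneg p.2} := rfl
      rw [this]
      exact (isClosed_discrete _).preimage ((continuous_apply _).prodMk (continuous_apply _))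
    · apply isClosed_iInter
      intro p
      have : {e : E | e (.imp p.1 p.2) = fimp (e p.1) (e p.2)} =
          (fun e : E => (e (.imp p.1 p.2), (e p.1, e p.2))) ⁻¹' {q | q.1 = fimp q.2.1 q.2.2} := rfl
      rw [this]
      exact (isClosed_discrete _).preimage
        ((continuous_apply _).prodMk ((continuous_apply _).prodMk (continuous_apply _)))
  set C : Set E := {e | IsHom n e} ∩ {e | e con ≠ ftop n} with hC
  have hCc : IsCompact C := by
    apply IsClosed.isCompact
    apply hcl1.inter
    have : {e : E | e con ≠ ftop n} = (fun e : E => e con) ⁻¹' {ftop n}ᶜ := rfl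
    rw [this]
    exact (isClosed_discrete _).preimage (continuous_apply _)
  set t : Formula → Set E := fun θ => if θ ∈ S then {e | e θ = ftop n} else Set.univ with ht
  have htcl : ∀ θ, IsClosed (t θ) := by
    intro θ
    simp only [ht]
    split_ifs
    · have : {e : E | e θ = ftop n} = (fun e : E => e θ) ⁻¹' {ftop n} := rfl
      rw [this]
      exact (isClosed_discrete _).preimage (continuous_apply _)
    · exact isClosed_univ
  have hempty : C ∩ ⋂ θ, t θ = ∅ := by
    ext e
    simp only [Set.mem_inter_iff, Set.mem_iInter, Set.mem_empty_iff_false, iff_false, not_and,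
      Set.mem_setOf_eq, hC]
    rintro ⟨he, hcon⟩ hall
    apply hcon
    apply h e he
    intro θ hθ
    have := hall θ
    rw [ht] at this
    simp only [if_pos hθ, Set.mem_setOf_eq] at this
    exact this
  obtain ⟨u, hu⟩ := hCc.elim_finite_subfamily_closed t htcl hempty
  refine ⟨(u.filter (fun θ => θ ∈ S)).toList, ?_, ?_⟩
  · intro θ hθ
    rw [Finset.mem_toList, Finset.mem_filter] at hθ
    exact hθ.2
  · intro e he hel
    by_contra hcon
    have : e ∈ C ∩ ⋂ θ ∈ u, t θ := by
      refine ⟨⟨he, hcon⟩, ?_⟩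
      simp only [Set.mem_iInter]
      intro θ hθ
      simp only [ht]
      split_ifs with hS
      · show e θ = ftop n
        exact hel θ (by rw [Finset.mem_toList, Finset.mem_filter]; exact ⟨hθ, hS⟩)
      · trivial
    rw [hu] at this
    exact this

lemma taut_podot_intro :
    PForm.Taut (n+2) (.imp (.var 0) (.imp (.var 1) (podot (.var 1) (.var 0)))) := by
  intro σ hσ
  have h0 := Tset_sub_Icc (hσ 0)
  have h1 := Tset_sub_Icc (hσ 1)
  show limp (σ 0) (limp (σ 1) (PForm.eval σ (podot (.var 1) (.var 0)))) = 1
  rw [eval_podot]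
  show limp (σ 0) (limp (σ 1) (max 0 (σ 1 + σ 0 - 1))) = 1
  rw [limp, limp]
  obtain ⟨h0a, h0b⟩ := h0
  obtain ⟨h1a, h1b⟩ := h1
  have hinner : σ 0 ≤ min 1 (1 - σ 1 + max 0 (σ 1 + σ 0 - 1)) := by
    apply le_min h0b
    rcases le_total 0 (σ 1 + σ 0 - 1) with h | h
    · rw [max_eq_right h]; linarith
    · rw [max_eq_left h]; linarith
  rw [min_eq_left (by linarith)]

lemma fpow_mem (T : Set Formula)
    (htaut : ∀ (ψ : PForm) (σ : ℕ → Formula), PForm.Taut (n+2) ψ → PForm.subst σ ψ ∈ T)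
    (hmp : ∀ φ ψ : Formula, Formula.imp φ ψ ∈ T → φ ∈ T → ψ ∈ T)
    {θ : Formula} (hθ : θ ∈ T) : ∀ k, fpow k θ ∈ T := by
  intro k
  induction k with
  | zero => exact hθ
  | succ k ih =>
    have key := htaut _ (fun j => if j = 0 then θ else fpow k θ) taut_podot_intro
    simp only [PForm.subst, podot] at key
    norm_num at key
    exact hmp _ _ (hmp _ _ key hθ) ih

lemma sat (T : Set Formula)
    (htaut : ∀ (ψ : PForm) (σ : ℕ → Formula), PForm.Taut (n+2) ψ → PForm.subst σ ψ ∈ T)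
    (hmp : ∀ φ ψ : Formula, Formula.imp φ ψ ∈ T → φ ∈ T → ψ ∈ T)
    (con : Formula)
    (h : ∀ e, IsHom n e → (∀ θ ∈ T, e θ = ftop n) → e con = ftop n) : con ∈ T := by
  obtain ⟨l, hlS, hl⟩ := cpt T con h
  have htautP : PForm.Taut (n+2) (l.foldr (fun θ acc => .imp (powP n (skel θ)) acc) (skel con)) := by
    intro σ hσ
    have hIcc : ∀ k, σ k ∈ Set.Icc (0:ℝ) 1 := fun k => Tset_sub_Icc (hσ k)
    have hhom : IsHom n (homOf n σ) := isHom_homOf σ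
    have key : ∀ l' : List Formula,
        ((∀ θ ∈ l', homOf n σ θ = ftop n) → homOf n σ con = ftop n) →
        PForm.eval σ (l'.foldr (fun θ acc => .imp (powP n (skel θ)) acc) (skel con)) = 1 := by
      intro l'
      induction l' with
      | nil =>
        intro hh
        rw [List.foldr_nil, eval_skel hσ, hh (by intro θ h; cases h), tv_ftop]
      | cons θ l' ih =>
        intro hh
        rw [List.foldr_cons]
        show limp (PForm.eval σ (powP n (skel θ))) _ = 1
        have hskel : PForm.eval σ (skel θ) = tv (n+2) (homOf n σ θ) := eval_skel hσ θ
        rw [eval_powP_tv hskel]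
        by_cases hc : homOf n σ θ = ftop n
        · rw [if_pos hc, ih (fun hall => hh (by
            intro θ' hθ'
            rcases List.mem_cons.1 hθ' with h1 | h1
            · rw [h1]; exact hc
            · exact hall θ' h1))]
          rw [limp]; norm_num
        · rw [if_neg hc, limp]
          have hb : PForm.eval σ (l'.foldr (fun θ acc => .imp (powP n (skel θ)) acc) (skel con)) ∈ Set.Icc (0:ℝ) 1 := by
            apply eval_mem_Icc hIcc
          rw [min_eq_left (by obtain ⟨a, b⟩ := hb; linarith)]
    exact key l (hl _ hhom)
  have hsub : ∀ l' : List Formula,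
      PForm.subst invFormula (l'.foldr (fun θ acc => .imp (powP n (skel θ)) acc) (skel con))
      = l'.foldr (fun θ acc => .imp (fpow n θ) acc) con := by
    intro l'
    induction l' with
    | nil => exact subst_skel con
    | cons θ l' ih =>
      rw [List.foldr_cons, List.foldr_cons]
      show Formula.imp (PForm.subst invFormula (powP n (skel θ))) _ = _
      rw [subst_powP, subst_skel, ih]
  have hmem : l.foldr (fun θ acc => .imp (fpow n θ) acc) con ∈ T := by
    rw [← hsub l]; exact htaut _ _ htautP
  have peel : ∀ l' : List Formula, (∀ θ ∈ l', θ ∈ T) →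
      l'.foldr (fun θ acc => Formula.imp (fpow n θ) acc) con ∈ T → con ∈ T := by
    intro l'
    induction l' with
    | nil => intro _ hm; exact hm
    | cons θ l' ih =>
      intro hS hm
      rw [List.foldr_cons] at hm
      exact ih (fun θ' h' => hS θ' (List.mem_cons_of_mem _ h'))
        (hmp _ _ hm (fpow_mem T htaut hmp (hS θ List.mem_cons_self) n))
  exact peel l hlS hmem

end Compact
section Worlds
variable {n : ℕ} {I : Fin (n+2) → Formula → Formula}

def IsWorld (n : ℕ) (I : Fin (n+2) → Formula → Formula) (e : Formula → Fin (n+2)) : Prop :=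
  IsHom n e ∧ ∀ θ : Formula, Thm (n+2) I θ → e θ = ftop n

lemma satThm (con : Formula)
    (h : ∀ e : Formula → Fin (n+2), IsWorld n I e → e con = ftop n) : Thm (n+2) I con := by
  have := sat {θ | Thm (n+2) I θ} (fun ψ σ ht => Thm.taut ψ σ ht)
    (fun φ ψ h1 h2 => Thm.mp φ ψ h1 h2) con
    (fun e he hth => h e ⟨he, fun θ ht => hth θ ht⟩)
  exact this

lemma hom_I (hI : IsIFamily (n+2) I) {e : Formula → Fin (n+2)} (he : IsHom n e)
    (a : Fin (n+2)) (ψ : Formula) :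
    e (I a ψ) = if a.1 ≤ (e ψ).1 then ftop n else 0 := by
  obtain ⟨P, hP1, hP2⟩ := hI
  have h1 : tv (n+2) (e (I a ψ)) = PForm.eval (fun _ => tv (n+2) (e ψ)) (P a) := by
    rw [hP1]; exact tv_subst he _ _
  rw [hP2 a _ (fun _ => tv_mem_Tset _)] at h1
  by_cases hc : a.1 ≤ (e ψ).1
  · rw [if_pos hc]
    apply tv_inj; rw [h1, if_pos (tv_le_tv.2 hc), tv_ftop]
  · rw [if_neg hc]
    apply tv_inj; rw [h1, if_neg (fun hh => hc (tv_le_tv.1 hh)), tv_zero]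

lemma nest_intro {e : Formula → Fin (n+2)} (he : IsHom n e) :
    ∀ (k : ℕ) (f : Fin k → Formula) (ψ : Formula),
    (∀ j, e (f j) = ftop n ∨ e (f j) = 0) →
    ((∀ j, e (f j) = ftop n) → e ψ = ftop n) →
    e (nestImp k f ψ) = ftop n
  | 0, f, ψ, _, h => h (fun j => j.elim0)
  | (k+1), f, ψ, hc, h => by
    show e (.imp (f (Fin.last k)) (nestImp k (fun i => f i.castSucc) ψ)) = ftop n
    rcases hc (Fin.last k) with htop | hzero
    · rw [he.imp, htop, fimp_ftop_left]
      exact nest_intro he k _ ψ (fun j => hc _)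
        (fun hall => h (fun j => Fin.lastCases htop hall j))
    · rw [he.imp, hzero, fimp_zero_left]

lemma nest_elim {e : Formula → Fin (n+2)} (he : IsHom n e) :
    ∀ (k : ℕ) (f : Fin k → Formula) (ψ : Formula),
    e (nestImp k f ψ) = ftop n → (∀ j, e (f j) = ftop n) → e ψ = ftop n
  | 0, _, _, h, _ => h
  | (k+1), f, ψ, h, hf => by
    apply nest_elim he k (fun i => f i.castSucc) ψ _ (fun j => hf _)
    have h' : e (.imp (f (Fin.last k)) (nestImp k (fun i => f i.castSucc) ψ)) = ftop n := h
    rw [he.imp, hf (Fin.last k), fimp_ftop_left] at h'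
    exact h'

def topF : Formula := .imp (.var 0) (.var 0)
def bigAnd (l : List Formula) : Formula := l.foldr Formula.and topF

lemma hom_topF {e : Formula → Fin (n+2)} (he : IsHom n e) : e topF = ftop n := by
  show e (.imp (.var 0) (.var 0)) = ftop n
  rw [he.imp]
  exact fimp_eq_ftop.2 le_rfl

lemma bigAnd_le {e : Formula → Fin (n+2)} (he : IsHom n e) {l : List Formula} {d : Formula}
    (hd : d ∈ l) : (e (bigAnd l)).1 ≤ (e d).1 := by
  induction l with
  | nil => cases hd
  | cons a l ih =>
    show (e (Formula.and a (bigAnd l))).1 ≤ _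
    rw [he.and_val]
    rcases List.mem_cons.1 hd with h1 | h1
    · rw [h1]; exact min_le_left _ _
    · exact le_trans (min_le_right _ _) (ih h1)

variable {x : Formula → Fin (n+2)}

lemma world_thm_le (hw : IsWorld n I x) {A B : Formula} (h : Thm (n+2) I (.imp A B)) :
    (x A).1 ≤ (x B).1 := hw.1.imp_le (hw.2 _ h)

lemma world_cond_and (hw : IsWorld n I x) (γ α β : Formula) :
    (x (.cond γ (Formula.and α β))).1 = min (x (.cond γ α)).1 (x (.cond γ β)).1 := by
  apply le_antisymm
  · have h1 := world_thm_le hw (Thm.a1 γ α β)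
    rwa [hw.1.and_val] at h1
  · have h2 := world_thm_le hw (Thm.a2 γ α β)
    rwa [hw.1.and_val] at h2

lemma world_cond_top (hw : IsWorld n I x) (γ : Formula) : x (.cond γ topF) = ftop n :=
  hw.2 _ (Thm.a3 γ 0)

lemma le_bigAnd_cond (hw : IsWorld n I x) {γ : Formula} {r : Fin (n+2)} {l : List Formula}
    (h : ∀ d ∈ l, r.1 ≤ (x (.cond γ d)).1) : r.1 ≤ (x (.cond γ (bigAnd l))).1 := by
  induction l with
  | nil =>
    show r.1 ≤ (x (.cond γ topF)).1
    rw [world_cond_top hw]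
    have := r.isLt
    show r.1 ≤ n+1
    omega
  | cons a l ih =>
    show r.1 ≤ (x (.cond γ (Formula.and a (bigAnd l)))).1
    rw [world_cond_and hw]
    exact le_min (h a List.mem_cons_self) (ih (fun d hd => h d (List.mem_cons_of_mem _ hd)))

lemma world_cond_congr {γ γ' : Formula}
    (h : ∀ e : Formula → Fin (n+2), IsWorld n I e → e γ = e γ')
    (hx : IsWorld n I x) (δ : Formula) :
    x (.cond γ δ) = x (.cond γ' δ) := by
  have hiff : Thm (n+2) I (Formula.iff γ γ') :=
    satThm _ (fun e hw => hw.1.iff_eq_ftop.2 (h e hw))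
  exact hx.1.iff_eq_ftop.1 (hx.2 _ (Thm.rcea γ γ' δ hiff))

end Worlds
section Existence
variable {n : ℕ} {I : Fin (n+2) → Formula → Formula}

lemma odot_val (a b : Fin (n+2)) : (odotIdx a b).1 = a.1 + b.1 - (n+1) := rfl

lemma rev_val (j : Fin (n+2)) : (revIdx j).1 = n+1 - j.1 := rfl

lemma world_I_iff (hI : IsIFamily (n+2) I) {e : Formula → Fin (n+2)} (he : IsHom n e)
    {a : Fin (n+2)} {ψ : Formula} : e (I a ψ) = ftop n ↔ a.1 ≤ (e ψ).1 := by
  rw [hom_I hI he]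
  split_ifs with h
  · simp [h]
  · constructor
    · intro h0
      have := congrArg Fin.val h0
      simp only [Fin.val_zero, ftop] at this
      omega
    · intro hh; exact absurd hh h

lemma world_I_crisp (hI : IsIFamily (n+2) I) {e : Formula → Fin (n+2)} (he : IsHom n e)
    (a : Fin (n+2)) (ψ : Formula) : e (I a ψ) = ftop n ∨ e (I a ψ) = 0 := by
  rw [hom_I hI he]
  split_ifs <;> simp

lemma existence (hI : IsIFamily (n+2) I) {x : Formula → Fin (n+2)} (hx : IsWorld n I x)
    (γ δ : Formula) (hlt : (x (.cond γ δ)).1 ≤ n) :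
    ∃ (b : Fin (n+2)) (y : Formula → Fin (n+2)), IsWorld n I y ∧
      n+1 ≤ b.1 + (x (.cond γ δ)).1 ∧
      (∀ δ' : Formula, (x (.cond γ δ')).1 + b.1 ≤ (y δ').1 + (n+1)) ∧
      (y δ).1 + (n+1) ≤ b.1 + (x (.cond γ δ)).1 := by
  classical
  by_contra Hno
  push_neg at Hno
  set c : Fin (n+2) := x (.cond γ δ) with hcdef
  set c1 : Fin (n+2) := ⟨c.1 + 1, by omega⟩ with hc1def
  -- step 1: for each b, a finite list of constraints suffices
  have hLb : ∀ b : Fin (n+2), ∃ L : List (Formula × Fin (n+2)),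
      (∀ p ∈ L, p.2 = x (.cond γ p.1)) ∧
      (∀ e : Formula → Fin (n+2), IsWorld n I e →
        (∀ p ∈ L, (odotIdx p.2 b).1 ≤ (e p.1).1) → (odotIdx c1 b).1 ≤ (e δ).1) := by
    intro b
    set S : Set Formula := {θ | Thm (n+2) I θ} ∪
      {ψ | ∃ d : Formula, ψ = I (odotIdx (x (.cond γ d)) b) d} with hS
    have hsem : ∀ e : Formula → Fin (n+2), IsHom n e →
        (∀ θ ∈ S, e θ = ftop n) → e (I (odotIdx c1 b) δ) = ftop n := by
      intro e he hall
      have hworld : IsWorld n I e := ⟨he, fun θ ht => hall θ (Or.inl ht)⟩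
      have hcons : ∀ d : Formula, (odotIdx (x (.cond γ d)) b).1 ≤ (e d).1 := by
        intro d
        exact (world_I_iff hI he).1 (hall _ (Or.inr ⟨d, rfl⟩))
      rw [world_I_iff hI he]
      by_contra hcon
      push_neg at hcon
      rw [odot_val] at hcon
      have hc1v : c1.1 = c.1 + 1 := rfl
      have hb : n+1 ≤ b.1 + c.1 := by omega
      have hfin := Hno b e hworld hb
        (fun δ' => by have := hcons δ'; rw [odot_val] at this; omega)
      omega
    obtain ⟨l, hlS, hl⟩ := cpt S (I (odotIdx c1 b) δ) hsem
    refine ⟨l.filterMap (fun ψ =>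
      if h : ∃ d : Formula, ψ = I (odotIdx (x (.cond γ d)) b) d
      then some (h.choose, x (.cond γ h.choose)) else none), ?_, ?_⟩
    · intro p hp
      obtain ⟨ψ, _, hψ2⟩ := List.mem_filterMap.1 hp
      split_ifs at hψ2 with h
      all_goals first | (cases hψ2 <;> rfl) | cases hψ2
    · intro e hw hcon
      have hall : ∀ θ ∈ l, e θ = ftop n := by
        intro θ hθ
        rcases hlS θ hθ with hthm | ⟨d, hd⟩
        · exact hw.2 θ hthm
        · have hex : ∃ d : Formula, θ = I (odotIdx (x (.cond γ d)) b) d := ⟨d, hd⟩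
          have hmem : (hex.choose, x (.cond γ hex.choose)) ∈ l.filterMap (fun ψ =>
              if h : ∃ d : Formula, ψ = I (odotIdx (x (.cond γ d)) b) d
              then some (h.choose, x (.cond γ h.choose)) else none) :=
            List.mem_filterMap.2 ⟨θ, hθ, by rw [dif_pos hex]⟩
          have := hcon _ hmem
          rw [hex.choose_spec, world_I_iff hI hw.1]
          exact this
      exact (world_I_iff hI hw.1).1 (hl e hw.1 hall)
  choose L hL1 hL2 using hLb
  set Lbig : List (Formula × Fin (n+2)) := (List.finRange (n+2)).flatMap L with hLbig
  have hbig1 : ∀ p ∈ Lbig, p.2 = x (.cond γ p.1) := by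
    intro p hp
    obtain ⟨b, _, hb2⟩ := List.mem_flatMap.1 hp
    exact hL1 b p hb2
  have hbig2 : ∀ (b : Fin (n+2)) (e : Formula → Fin (n+2)), IsWorld n I e →
      (∀ p ∈ Lbig, (odotIdx p.2 b).1 ≤ (e p.1).1) → (odotIdx c1 b).1 ≤ (e δ).1 := by
    intro b e hw hcon
    exact hL2 b e hw (fun p hp => hcon p (List.mem_flatMap.2 ⟨b, List.mem_finRange b, hp⟩))
  set γfun : Fin (n+2) → Formula := fun j =>
    bigAnd ((Lbig.filter (fun p => decide ((revIdx j).1 ≤ p.2.1))).map Prod.fst) with hγfun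
  -- premises of rule ra
  have hprem : ∀ b : Fin (n+2),
      Thm (n+2) I (nestImp (n+2) (fun j => I (odotIdx (revIdx j) b) (γfun j))
        (I (odotIdx c1 b) δ)) := by
    intro b
    apply satThm
    intro e hw
    apply nest_intro hw.1
    · intro j
      exact world_I_crisp hI hw.1 _ _
    · intro hall
      rw [world_I_iff hI hw.1]
      apply hbig2 b e hw
      intro p hp
      have hple : p.2.1 ≤ n+1 := by have := p.2.isLt; omega
      set j : Fin (n+2) := ⟨n+1 - p.2.1, by omega⟩ with hj
      have hrev : revIdx j = p.2 := by
        apply Fin.ext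
        rw [rev_val]
        simp only [hj]
        omega
      have hmem : p.1 ∈ (Lbig.filter (fun p => decide ((revIdx j).1 ≤ p.2.1))).map Prod.fst := by
        apply List.mem_map.2
        refine ⟨p, ?_, rfl⟩
        rw [List.mem_filter]
        exact ⟨hp, by rw [hrev]; simp⟩
      have h1 := bigAnd_le hw.1 hmem
      have h2 := (world_I_iff hI hw.1).1 (hall j)
      rw [hrev] at h2
      exact le_trans h2 h1
  have hconc := Thm.ra c1 γ γfun δ hprem
  have hx2 := hx.2 _ hconc
  have hf : ∀ j : Fin (n+2), x (I (revIdx j) (.cond γ (γfun j))) = ftop n := by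
    intro j
    rw [world_I_iff hI hx.1]
    apply le_bigAnd_cond hx
    intro d hd
    obtain ⟨p, hp1, hp2⟩ := List.mem_map.1 hd
    rw [List.mem_filter] at hp1
    have := hbig1 p hp1.1
    have hle : (revIdx j).1 ≤ p.2.1 := by simpa using hp1.2
    rw [← hp2, ← this]
    exact hle
  have := nest_elim hx.1 (n+2) _ _ hx2 hf
  rw [world_I_iff hI hx.1] at this
  have hc1v : c1.1 = c.1 + 1 := rfl
  omega

end Existence
section CanModel
variable {n : ℕ} {I : Fin (n+2) → Formula → Formula}

def Wld (n : ℕ) (I : Fin (n+2) → Formula → Formula) : Type :=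
  {e : Formula → Fin (n+2) // IsWorld n I e}

def canSet (n : ℕ) (I : Fin (n+2) → Formula → Formula)
    (X : Fin (n+2) → Set (Wld n I)) (x y : Wld n I) : Set ℕ :=
  {k : ℕ | ∃ γ' : Formula, (∀ (w : Wld n I) (i : Fin (n+2)), w ∈ X i ↔ w.1 γ' = i) ∧
      ∃ δ' : Formula, k = (fimp (x.1 (.cond γ' δ')) (y.1 δ')).1}

lemma canSet_lt (X : Fin (n+2) → Set (Wld n I)) (x y : Wld n I) :
    sInf (canSet n I X x y) < n+2 := by
  rcases Set.eq_empty_or_nonempty (canSet n I X x y) with h | h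
  · rw [h, Nat.sInf_empty]; omega
  · obtain ⟨γ', _, δ', hk⟩ := Nat.sInf_mem h
    rw [hk]
    exact (fimp _ _).isLt

noncomputable def canRIdx (X : Fin (n+2) → Set (Wld n I)) (x y : Wld n I) : Fin (n+2) :=
  ⟨sInf (canSet n I X x y), canSet_lt X x y⟩

noncomputable def canModel (n : ℕ) (I : Fin (n+2) → Formula → Formula)
    (hne : Nonempty (Wld n I)) : Model (n+2) (Wld n I) where
  ne := hne
  R := fun X x y => tv (n+2) (canRIdx X x y)
  R_mem := fun _ _ _ => tv_mem_Tset _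
  v := fun p e => tv (n+2) (e.1 (.var p))
  v_mem := fun _ _ => tv_mem_Tset _

lemma truth (hI : IsIFamily (n+2) I) (hne : Nonempty (Wld n I)) :
    ∀ (χ : Formula) (e : Wld n I), (canModel n I hne).val χ e = tv (n+2) (e.1 χ) := by
  intro χ
  induction χ with
  | var p => intro e; rfl
  | neg φ ih =>
    intro e
    show lneg ((canModel n I hne).val φ e) = _
    rw [ih e, lneg_tv, ← e.2.1.neg]
  | imp φ ψ ihφ ihψ =>
    intro e
    show limp ((canModel n I hne).val φ e) ((canModel n I hne).val ψ e) = _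
    rw [ihφ e, ihψ e, limp_tv, ← e.2.1.imp]
  | cond γ δ ihγ ihδ =>
    intro e
    show sInf (Set.range fun y : Wld n I =>
        limp (tv (n+2) (canRIdx (fun i => {z | (canModel n I hne).val γ z = tv (n+2) i}) e y))
          ((canModel n I hne).val δ y)) = tv (n+2) (e.1 (.cond γ δ))
    set X : Fin (n+2) → Set (Wld n I) :=
      fun i => {z | (canModel n I hne).val γ z = tv (n+2) i} with hXdef
    have hX : ∀ (w : Wld n I) (i : Fin (n+2)), w ∈ X i ↔ w.1 γ = i := by
      intro w i
      constructor
      · intro hw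
        have : (canModel n I hne).val γ w = tv (n+2) i := hw
        rw [ihγ w] at this
        exact tv_inj this
      · intro hw
        show (canModel n I hne).val γ w = tv (n+2) i
        rw [ihγ w, hw]
    have hcoh : ∀ γ' : Formula, (∀ (w : Wld n I) (i : Fin (n+2)), w ∈ X i ↔ w.1 γ' = i) →
        ∀ (δ'' : Formula) (z : Wld n I), z.1 (.cond γ' δ'') = z.1 (.cond γ δ'') := by
      intro γ' hγ' δ'' z
      have heq : ∀ e' : Formula → Fin (n+2), IsWorld n I e' → e' γ' = e' γ := by
        intro e' he'
        have h1 := (hγ' ⟨e', he'⟩ (e' γ)).2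
        have h2 := (hX ⟨e', he'⟩ (e' γ)).2 rfl
        exact (hγ' ⟨e', he'⟩ (e' γ)).1 h2
      exact world_cond_congr heq z.2 δ''
    set c : Fin (n+2) := e.1 (.cond γ δ) with hcdef
    have hbdd : BddBelow (Set.range fun y : Wld n I =>
        limp (tv (n+2) (canRIdx X e y)) ((canModel n I hne).val δ y)) := by
      refine ⟨0, ?_⟩
      rintro v ⟨y, rfl⟩
      dsimp only
      rw [ihδ y, limp_tv]
      exact tv_nonneg _
    have hmemc : ∀ y : Wld n I, (fimp c (y.1 δ)).1 ∈ canSet n I X e y := by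
      intro y
      exact ⟨γ, hX, δ, rfl⟩
    apply le_antisymm
    · -- sInf ≤ tv c
      by_cases htop : c.1 = n+1
      · obtain ⟨y0⟩ := id hne
        apply csInf_le hbdd ⟨y0, rfl⟩ |>.trans
        · dsimp only
          rw [ihδ y0, limp_tv]
          have h1 : (fimp (canRIdx X e y0) (y0.1 δ)).1 ≤ c.1 := by
            rw [htop]
            have := (fimp (canRIdx X e y0) (y0.1 δ)).isLt
            omega
          exact tv_le_tv.2 h1
      · have hlt : c.1 ≤ n := by have := c.isLt; omega
        obtain ⟨b, y, hw, hbc, h1, h2⟩ := existence hI e.2 γ δ hlt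
        set yw : Wld n I := ⟨y, hw⟩ with hyw
        have hr : b.1 ≤ (canRIdx X e yw).1 := by
          show b.1 ≤ sInf (canSet n I X e yw)
          have hnem : (canSet n I X e yw).Nonempty := ⟨_, hmemc yw⟩
          obtain ⟨γ', hγ', δ', hk⟩ := Nat.sInf_mem hnem
          rw [hk, hcoh γ' hγ' δ' e]
          have := h1 δ'
          show b.1 ≤ (fimp (e.1 (.cond γ δ')) (y δ')).1
          show b.1 ≤ min (n+1) (n+1 - (e.1 (.cond γ δ')).1 + (y δ').1)
          have hb2 := b.isLt
          omega
        apply csInf_le hbdd ⟨yw, rfl⟩ |>.trans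
        dsimp only
        rw [ihδ yw, limp_tv]
        apply tv_le_tv.2
        show (fimp (canRIdx X e yw) (y δ)).1 ≤ c.1
        show min (n+1) (n+1 - (canRIdx X e yw).1 + (y δ).1) ≤ c.1
        have hb2 := b.isLt
        omega
    · -- tv c ≤ sInf
      apply le_csInf (Set.range_nonempty _)
      rintro v ⟨y, rfl⟩
      dsimp only
      rw [ihδ y, limp_tv]
      apply tv_le_tv.2
      have hr : (canRIdx X e y).1 ≤ (fimp c (y.1 δ)).1 := Nat.sInf_le (hmemc y)
      show c.1 ≤ (fimp (canRIdx X e y) (y.1 δ)).1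
      rw [show (fimp c (y.1 δ)).1 = min (n+1) (n+1 - c.1 + (y.1 δ).1) from rfl] at hr
      show c.1 ≤ min (n+1) (n+1 - (canRIdx X e y).1 + (y.1 δ).1)
      have hc2 := c.isLt
      have hy2 := (y.1 δ).isLt
      omega

end CanModel

/-- Completeness of LCR: if Γ ⊨ φ then Γ ⊢_LCR φ. -/
theorem completeness_LCR (m : ℕ) (hm : 2 ≤ m)
    (I : Fin m → Formula → Formula) (hI : IsIFamily m I)
    (Γ : Set Formula) (φ : Formula)
    (h : Entails m Γ φ) : Deriv m I Γ φ := by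
  obtain ⟨n, rfl⟩ : ∃ n : ℕ, m = n + 2 := ⟨m - 2, by omega⟩
  by_contra hnd
  set T : Set Formula := {ψ | Deriv (n+2) I Γ ψ} with hT
  have hnall : ¬ (∀ e : Formula → Fin (n+2), IsHom n e →
      (∀ θ ∈ T, e θ = ftop n) → e φ = ftop n) := by
    intro hall
    exact hnd (sat T (fun ψ σ ht => Deriv.thm _ (Thm.taut ψ σ ht))
      (fun a b h1 h2 => Deriv.mp a b h1 h2) φ hall)
  push_neg at hnall
  obtain ⟨e0, he0, hT0, hφ0⟩ := hnall
  have hw0 : IsWorld n I e0 := ⟨he0, fun θ ht => hT0 θ (Deriv.thm θ ht)⟩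
  have hne : Nonempty (Wld n I) := ⟨⟨e0, hw0⟩⟩
  have htr := truth hI hne
  have hval := h (Wld n I) (canModel n I hne) ⟨e0, hw0⟩ (by
    intro ψ hψ
    rw [htr ψ ⟨e0, hw0⟩]
    have he : e0 ψ = ftop n := hT0 ψ (Deriv.mem ψ hψ)
    show tv (n+2) (e0 ψ) = 1
    rw [he, tv_ftop])
  rw [htr φ ⟨e0, hw0⟩] at hval
  apply hφ0
  apply tv_inj
  show tv (n+2) (e0 φ) = tv (n+2) (ftop n)
  rw [tv_ftop]
  exact hval

end LCR
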